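/- arXiv:1512.00597 — 9 statements merged into one kernel-verified Lean document; each statement's English description precedes it below -/
import Mathlib

section
/- In the P3 setup, fix an index i and suppose additionally: D_i is differentiable with D_i'(x) ≤ D'_{i,max} for all x ∈ [x_{i,min}, x_{i,max}]; p_b ≤ p_{b,max}; the perturbation parameter satisfies β_i = V·(p_{b,max} + D'_{i,max}) − x_{i,min} + s_{i,min}; and s_i < −x_{i,min} + s_{i,min}. Then every minimizer u* = (x_1*,…,x_N*, l_m*, g*, e_b*, e_s*) of the P3 objective over the P3-feasible set satisfies x_i* = min(a_i, x_{i,max}). -/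
/-- A control action `u = (x₁,…,x_N, l_m, g, e_b, e_s)` in the per-slot problem P3. -/
structure Ctrl (N : ℕ) where
  x : Fin N → ℝ
  lm : ℝ
  g : ℝ
  eb : ℝ
  es : ℝ

/-- P3-feasibility of a control action. -/
def P3Feasible {N : ℕ} (a xmin xmax : Fin N → ℝ) (lb lf gmax gprev r : ℝ)
    (u : Ctrl N) : Prop :=
  lb ≤ u.lm ∧ u.lm ≤ lb + lf ∧
  (∀ i, xmin i ≤ u.x i ∧ u.x i ≤ xmax i ∧ u.x i ≤ a i) ∧
  0 ≤ u.g ∧ u.g ≤ gmax ∧ |u.g - gprev| ≤ r * gmax ∧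
  0 ≤ u.eb ∧ 0 ≤ u.es ∧
  u.g + u.eb + ∑ i, (a i - u.x i) = u.es + u.lm

/-- The P3 objective
`f(u) = Σᵢ [V·Dᵢ(xᵢ) + (sᵢ − βᵢ)·xᵢ] + V·C(g) + V·p_b·e_b − V·p_s·e_s − (J/l_f)·l_m`. -/
noncomputable def P3Obj {N : ℕ} (s β : Fin N → ℝ) (D : Fin N → ℝ → ℝ) (C : ℝ → ℝ)
    (V pb ps J lf : ℝ) (u : Ctrl N) : ℝ :=
  (∑ i, (V * D i (u.x i) + (s i - β i) * u.x i)) + V * C u.g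
    + V * pb * u.eb - V * ps * u.es - (J / lf) * u.lm

/-- Lemma 2.1: forced charging when the energy state is low. -/
theorem stmt4 (N : ℕ) (a s β xmin xmax : Fin N → ℝ)
    (lb lf pb ps J gmax gprev r V : ℝ)
    (D : Fin N → ℝ → ℝ) (C : ℝ → ℝ)
    (ha : ∀ i, 0 ≤ a i) (hlb : 0 ≤ lb) (hlf : 0 < lf) (hJ : 0 ≤ J)
    (hxmin : ∀ i, xmin i < 0) (hxmax : ∀ i, 0 < xmax i)
    (hgmax : 0 < gmax) (hgprev : gprev ∈ Set.Icc 0 gmax)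
    (hr : r ∈ Set.Icc (0 : ℝ) 1) (hV : 0 < V)
    (i : Fin N) (Dmax pbmax smin : ℝ)
    (hDdiff : ∀ x ∈ Set.Icc (xmin i) (xmax i), DifferentiableAt ℝ (D i) x)
    (hDmax : ∀ x ∈ Set.Icc (xmin i) (xmax i), deriv (D i) x ≤ Dmax)
    (hpb : pb ≤ pbmax)
    (hβ : β i = V * (pbmax + Dmax) - xmin i + smin)
    (hsi : s i < -xmin i + smin)
    (u : Ctrl N)
    (hfeas : P3Feasible a xmin xmax lb lf gmax gprev r u)
    (hmin : ∀ v, P3Feasible a xmin xmax lb lf gmax gprev r v →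
      P3Obj s β D C V pb ps J lf u ≤ P3Obj s β D C V pb ps J lf v) :
    u.x i = min (a i) (xmax i) := by
  by_contra hne
  set m := min (a i) (xmax i) with hm
  obtain ⟨h1, h2, hx, hg0, hg1, hg2, heb, hes, hbal⟩ := hfeas
  obtain ⟨hxi1, hxi2, hxi3⟩ := hx i
  have hxm : u.x i ≤ m := le_min hxi3 hxi2
  have hlt : u.x i < m := lt_of_le_of_ne hxm hne
  set δ := m - u.x i with hδdef
  have hδ : 0 < δ := by simp [hδdef]; linarith
  -- bounds on m
  have hmmin : xmin i < m := lt_min (lt_of_lt_of_le (hxmin i) (ha i)) (lt_trans (hxmin i) (hxmax i))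
  have hmmax : m ≤ xmax i := min_le_right _ _
  have hma : m ≤ a i := min_le_left _ _
  -- the modified control
  set v : Ctrl N := ⟨Function.update u.x i m, u.lm, u.g, u.eb + δ, u.es⟩ with hv
  -- sum lemma
  have hsum : ∀ F : Fin N → ℝ → ℝ,
      (∑ j, F j (Function.update u.x i m j)) = (∑ j, F j (u.x j)) + (F i m - F i (u.x i)) := by
    intro F
    have h0 : (∑ j, (F j (Function.update u.x i m j) - F j (u.x j)))
        = F i m - F i (u.x i) := by
      rw [Finset.sum_eq_single_of_mem i (Finset.mem_univ i)]
      · simp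
      · intro b _ hb
        simp [Function.update_of_ne hb]
    have h1 := Finset.sum_sub_distrib (f := fun j => F j (Function.update u.x i m j))
      (g := fun j => F j (u.x j)) (s := Finset.univ)
    rw [h1] at h0
    linarith
  -- feasibility of v
  have hvfeas : P3Feasible a xmin xmax lb lf gmax gprev r v := by
    refine ⟨h1, h2, ?_, hg0, hg1, hg2, by positivity, hes, ?_⟩
    · intro j
      by_cases hj : j = i
      · subst hj
        simp only [hv, Function.update_self]
        exact ⟨le_of_lt hmmin, hmmax, hma⟩
      · simpa [hv, Function.update_of_ne hj] using hx j
    · have := hsum (fun j x => a j - x)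
      simp only [hv]
      rw [this]
      linarith
  -- MVT bound
  have hsub : Set.Icc (u.x i) m ⊆ Set.Icc (xmin i) (xmax i) := by
    intro y hy
    exact ⟨le_trans hxi1 hy.1, le_trans hy.2 hmmax⟩
  have hcont : ContinuousOn (D i) (Set.Icc (u.x i) m) := fun y hy =>
    (hDdiff y (hsub hy)).continuousAt.continuousWithinAt
  have hderiv : ∀ y ∈ Set.Ioo (u.x i) m, HasDerivAt (D i) (deriv (D i) y) y := by
    intro y hy
    exact (hDdiff y (hsub ⟨le_of_lt hy.1, le_of_lt hy.2⟩)).hasDerivAt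
  obtain ⟨c, hc, hceq⟩ := exists_hasDerivAt_eq_slope (D i) (deriv (D i)) hlt hcont hderiv
  have hcbound : deriv (D i) c ≤ Dmax := hDmax c (hsub ⟨le_of_lt hc.1, le_of_lt hc.2⟩)
  have hDbound : D i m - D i (u.x i) ≤ Dmax * δ := by
    have hne0 : m - u.x i ≠ 0 := by linarith
    have : D i m - D i (u.x i) = deriv (D i) c * δ := by
      rw [hceq, hδdef]; field_simp
    rw [this]
    exact mul_le_mul_of_nonneg_right hcbound (le_of_lt hδ)
  -- objective comparison
  have hobj := hmin v hvfeas
  have hexp : P3Obj s β D C V pb ps J lf v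
      = P3Obj s β D C V pb ps J lf u
        + (V * (D i m - D i (u.x i)) + (s i - β i) * δ + V * pb * δ) := by
    simp only [P3Obj, hv]
    rw [hsum (fun j x => V * D j x + (s j - β j) * x)]
    ring
  have hneg : V * (D i m - D i (u.x i)) + (s i - β i) * δ + V * pb * δ < 0 := by
    have h3 : s i - β i < -V * (pbmax + Dmax) := by rw [hβ]; linarith
    have h4 : V * (D i m - D i (u.x i)) ≤ V * (Dmax * δ) :=
      mul_le_mul_of_nonneg_left hDbound (le_of_lt hV)
    have h5 : (s i - β i) * δ < (-V * (pbmax + Dmax)) * δ :=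
      mul_lt_mul_of_pos_right h3 hδ
    have h6 : V * pb * δ ≤ V * pbmax * δ := by
      have := mul_le_mul_of_nonneg_left hpb (le_of_lt hV)
      exact mul_le_mul_of_nonneg_right this (le_of_lt hδ)
    nlinarith
  linarith [hobj, hexp ▸ hobj]
end

section
/- Let x_min < 0 < x_max and s_min < s_max be reals, and let p_{b,max}, p_{s,min}, D'_max, D'_min be reals with p_{b,max} − p_{s,min} + D'_max − D'_min > 0 and s_max − s_min + x_min − x_max > 0. Let 0 < V ≤ V_max where V_max = (s_max − s_min + x_min − x_max)/(p_{b,max} − p_{s,min} + D'_max − D'_min), and set β = V·(p_{b,max} + D'_max) − x_min + s_min. Let a, x, s : ℕ → ℝ be sequences with a(t) ≥ 0, x_min ≤ x(t) ≤ x_max, and s(t+1) = s(t) + x(t) for all t, s(0) ∈ [s_min, s_max], and suppose for every t: (i) if s(t) < −x_min + s_min then x(t) = min(a(t), x_max), and (ii) if s(t) > β − V·(p_{s,min} + D'_min) then x(t) = x_min. Then s_min ≤ s(t) ≤ s_max for all t ∈ ℕ. -/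
/-- Lemma 3: under the forced-charging/forced-discharging properties of
Algorithm 1 with perturbation `β` and `V ∈ (0, V_max]`, the storage energy state always
stays within `[s_min, s_max]`. -/
theorem stmt6 (xmin xmax smin smax pbmax psmin D'max D'min V Vmax β : ℝ)
    (hxmin : xmin < 0) (hxmax : 0 < xmax) (hsm : smin < smax)
    (hden : 0 < pbmax - psmin + D'max - D'min)
    (hnum : 0 < smax - smin + xmin - xmax)
    (hVmax : Vmax = (smax - smin + xmin - xmax) / (pbmax - psmin + D'max - D'min))
    (hV0 : 0 < V) (hV : V ≤ Vmax)
    (hβ : β = V * (pbmax + D'max) - xmin + smin)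
    (a x s : ℕ → ℝ)
    (ha : ∀ t, 0 ≤ a t) (hx : ∀ t, xmin ≤ x t ∧ x t ≤ xmax)
    (hrec : ∀ t, s (t + 1) = s t + x t)
    (hs0 : s 0 ∈ Set.Icc smin smax)
    (hcharge : ∀ t, s t < -xmin + smin → x t = min (a t) xmax)
    (hdischarge : ∀ t, s t > β - V * (psmin + D'min) → x t = xmin) :
    ∀ t, smin ≤ s t ∧ s t ≤ smax := by
  have hthr : β - V * (psmin + D'min) ≤ smax - xmax := by
    have hVd : V * (pbmax - psmin + D'max - D'min) ≤ smax - smin + xmin - xmax := by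
      have := (le_div_iff₀ hden).mp (hVmax ▸ hV)
      linarith
    rw [hβ]; nlinarith
  intro t
  induction t with
  | zero => exact ⟨hs0.1, hs0.2⟩
  | succ n ih =>
    obtain ⟨ihl, ihr⟩ := ih
    constructor
    · by_cases h : s n < -xmin + smin
      · have hxe := hcharge n h
        have : 0 ≤ x n := by
          rw [hxe]; exact le_min (ha n) (le_of_lt hxmax)
        rw [hrec]; linarith
      · push_neg at h
        rw [hrec]; have := (hx n).1; linarith
    · by_cases h : s n > β - V * (psmin + D'min)
      · have hxe := hdischarge n h
        rw [hrec, hxe]; linarith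
      · push_neg at h
        rw [hrec]; have := (hx n).2; linarith
end

section
/- Let x_min < 0 < x_max and s_min be reals, and let p_{b,max}, p_{s,min}, D'_max, D'_min be reals with p_{b,max} − p_{s,min} + D'_max − D'_min ≥ 0. Let V > 0 be arbitrary, set β = V·(p_{b,max} + D'_max) − x_min + s_min, and define s_up = V·(p_{b,max} − p_{s,min} + D'_max − D'_min) + x_max − x_min + s_min. Let a, x, s : ℕ → ℝ be sequences with a(t) ≥ 0, x_min ≤ x(t) ≤ x_max, and s(t+1) = s(t) + x(t) for all t, s(0) ∈ [s_min, s_up], and suppose for every t: (i) if s(t) < −x_min + s_min then x(t) = min(a(t), x_max), and (ii) if s(t) > β − V·(p_{s,min} + D'_min) then x(t) = x_min. Then s_min ≤ s(t) ≤ s_up for all t ∈ ℕ. -/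
/-- Proposition 2: for any `V > 0` the energy state under Algorithm 1
stays in `[s_min, s_up]` with `s_up = V·(p_{b,max} − p_{s,min} + D'_max − D'_min)
+ x_max − x_min + s_min`. -/
theorem stmt7 (xmin xmax smin pbmax psmin D'max D'min V β sup : ℝ)
    (hxmin : xmin < 0) (hxmax : 0 < xmax)
    (hden : 0 ≤ pbmax - psmin + D'max - D'min)
    (hV : 0 < V)
    (hβ : β = V * (pbmax + D'max) - xmin + smin)
    (hsup : sup = V * (pbmax - psmin + D'max - D'min) + xmax - xmin + smin)
    (a x s : ℕ → ℝ)
    (ha : ∀ t, 0 ≤ a t) (hx : ∀ t, xmin ≤ x t ∧ x t ≤ xmax)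
    (hrec : ∀ t, s (t + 1) = s t + x t)
    (hs0 : s 0 ∈ Set.Icc smin sup)
    (hcharge : ∀ t, s t < -xmin + smin → x t = min (a t) xmax)
    (hdischarge : ∀ t, s t > β - V * (psmin + D'min) → x t = xmin) :
    ∀ t, smin ≤ s t ∧ s t ≤ sup := by
  have hVden : 0 ≤ V * (pbmax - psmin + D'max - D'min) := mul_nonneg hV.le hden
  intro t
  induction t with
  | zero => exact ⟨hs0.1, hs0.2⟩
  | succ n ih =>
    obtain ⟨ihl, ihr⟩ := ih
    rw [hrec n]
    by_cases hc : s n < -xmin + smin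
    · have hxeq := hcharge n hc
      have hx0 : 0 ≤ x n := by
        rw [hxeq]; exact le_min (ha n) hxmax.le
      constructor
      · linarith
      · have : x n ≤ xmax := (hx n).2
        have : s n + x n < -xmin + smin + xmax := by linarith
        have hsupge : -xmin + smin + xmax ≤ sup := by rw [hsup]; linarith
        linarith
    · push_neg at hc
      have hl : smin ≤ s n + x n := by
        have := (hx n).1; linarith
      by_cases hd : s n > β - V * (psmin + D'min)
      · have hxeq := hdischarge n hd
        exact ⟨hl, by rw [hxeq]; linarith⟩
      · push_neg at hd
        have : β - V * (psmin + D'min) = sup - xmax := by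
          rw [hβ, hsup]; ring
        have := (hx n).2
        exact ⟨hl, by linarith⟩
end

section
/- Let α ∈ [0,1] and M ≥ 0 be reals, and let l_b, l_f, l_m : ℕ → ℝ be sequences with l_b(t) ≥ 0, l_f(t) > 0, and l_b(t) ≤ l_m(t) ≤ l_b(t) + l_f(t) for all t. Define J : ℕ → ℝ by J(0) = 0 and J(t+1) = max(J(t) − α, 0) + (l_b(t) + l_f(t) − l_m(t))/l_f(t). Suppose that for every t with J(t) > M one has l_m(t) = l_b(t) + l_f(t). Then J(t) ≤ M + 1 for all t ∈ ℕ. -/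
/-- Proposition 3.1: if the queue exceeding `M` forces all flexible loads
to be served, then the virtual queue backlog is uniformly bounded by `M + 1`. -/
theorem stmt8 (α M : ℝ) (hα : α ∈ Set.Icc (0 : ℝ) 1) (hM : 0 ≤ M)
    (lb lf lm : ℕ → ℝ)
    (hlb : ∀ t, 0 ≤ lb t) (hlf : ∀ t, 0 < lf t)
    (hlm : ∀ t, lb t ≤ lm t ∧ lm t ≤ lb t + lf t)
    (J : ℕ → ℝ) (hJ0 : J 0 = 0)
    (hJrec : ∀ t, J (t + 1) = max (J t - α) 0 + (lb t + lf t - lm t) / lf t)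
    (hforce : ∀ t, J t > M → lm t = lb t + lf t) :
    ∀ t, J t ≤ M + 1 := by
  obtain ⟨hα0, hα1⟩ := hα
  intro t
  induction t with
  | zero => rw [hJ0]; linarith
  | succ t ih =>
    rw [hJrec t]
    by_cases h : J t > M
    · rw [hforce t h]
      have : (lb t + lf t - (lb t + lf t)) / lf t = 0 := by
        rw [sub_self]; simp
      rw [this, add_zero]
      have : max (J t - α) 0 ≤ J t := by
        apply max_le <;> linarith
      linarith
    · push_neg at h
      have h1 : max (J t - α) 0 ≤ M := by
        apply max_le <;> linarith
      have h2 : (lb t + lf t - lm t) / lf t ≤ 1 := by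
        rw [div_le_one (hlf t)]
        have := (hlm t).1
        linarith
      linarith
end

section
/- In the P3 setup, suppose additionally that V·p_b − J/l_f < 0. Then every minimizer u* = (x_1*,…,x_N*, l_m*, g*, e_b*, e_s*) of the P3 objective over the P3-feasible set satisfies l_m* = l_b + l_f. -/
/-- inside proof of Proposition 3.1: when `V·p_b − J/l_f < 0`, every
P3-minimizer serves all flexible loads, i.e. `l_m* = l_b + l_f`. -/
theorem stmt9 (N : ℕ) (a s β xmin xmax : Fin N → ℝ)
    (lb lf pb ps J gmax gprev r V : ℝ)
    (D : Fin N → ℝ → ℝ) (C : ℝ → ℝ)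
    (ha : ∀ i, 0 ≤ a i) (hlb : 0 ≤ lb) (hlf : 0 < lf) (hJ : 0 ≤ J)
    (hxmin : ∀ i, xmin i < 0) (hxmax : ∀ i, 0 < xmax i)
    (hgmax : 0 < gmax) (hgprev : gprev ∈ Set.Icc 0 gmax)
    (hr : r ∈ Set.Icc (0 : ℝ) 1) (hV : 0 < V)
    (hneg : V * pb - J / lf < 0)
    (u : Ctrl N)
    (hfeas : P3Feasible a xmin xmax lb lf gmax gprev r u)
    (hmin : ∀ v, P3Feasible a xmin xmax lb lf gmax gprev r v →
      P3Obj s β D C V pb ps J lf u ≤ P3Obj s β D C V pb ps J lf v) :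
    u.lm = lb + lf := by

  by_contra hne
  obtain ⟨h1, h2, h3, h4, h5, h6, h7, h8, h9⟩ := hfeas
  have hlt : u.lm < lb + lf := lt_of_le_of_ne h2 hne
  set δ := lb + lf - u.lm with hδ
  have hδpos : 0 < δ := by simp [hδ]; linarith
  set v : Ctrl N := ⟨u.x, lb + lf, u.g, u.eb + δ, u.es⟩ with hv
  have hvfeas : P3Feasible a xmin xmax lb lf gmax gprev r v := by
    refine ⟨by simp [hv]; linarith, le_refl _, h3, h4, h5, h6, by simp [hv]; linarith, h8, ?_⟩
    simp only [hv]
    linarith [h9]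
  have := hmin v hvfeas
  have hobj : P3Obj s β D C V pb ps J lf v
      = P3Obj s β D C V pb ps J lf u + (V * pb - J / lf) * δ := by
    simp only [P3Obj, hv]
    ring
  have : (V * pb - J / lf) * δ < 0 := mul_neg_of_neg_of_pos hneg hδpos
  linarith [hmin v hvfeas, hobj]
end

section
/- In the P3 setup, suppose additionally that p_b > p_s. Then every minimizer u* = (x_1*,…,x_N*, l_m*, g*, e_b*, e_s*) of the P3 objective over the P3-feasible set satisfies e_b*·e_s* = 0. -/
/-- Proposition 3.2: since the buying price strictly exceeds the selling
price, a P3-minimizer never simultaneously buys and sells: `e_b*·e_s* = 0`. -/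
theorem stmt10 (N : ℕ) (a s β xmin xmax : Fin N → ℝ)
    (lb lf pb ps J gmax gprev r V : ℝ)
    (D : Fin N → ℝ → ℝ) (C : ℝ → ℝ)
    (ha : ∀ i, 0 ≤ a i) (hlb : 0 ≤ lb) (hlf : 0 < lf) (hJ : 0 ≤ J)
    (hxmin : ∀ i, xmin i < 0) (hxmax : ∀ i, 0 < xmax i)
    (hgmax : 0 < gmax) (hgprev : gprev ∈ Set.Icc 0 gmax)
    (hr : r ∈ Set.Icc (0 : ℝ) 1) (hV : 0 < V)
    (hpbs : pb > ps)
    (u : Ctrl N)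
    (hfeas : P3Feasible a xmin xmax lb lf gmax gprev r u)
    (hmin : ∀ v, P3Feasible a xmin xmax lb lf gmax gprev r v →
      P3Obj s β D C V pb ps J lf u ≤ P3Obj s β D C V pb ps J lf v) :
    u.eb * u.es = 0 := by
  obtain ⟨h1, h2, h3, h4, h5, h6, heb, hes, hbal⟩ := hfeas
  by_contra hne
  have hebp : 0 < u.eb := lt_of_le_of_ne heb (fun h => hne (by rw [← h]; ring))
  have hesp : 0 < u.es := lt_of_le_of_ne hes (fun h => hne (by rw [← h]; ring))
  set m := min u.eb u.es with hm
  have hmp : 0 < m := lt_min hebp hesp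
  set v : Ctrl N := ⟨u.x, u.lm, u.g, u.eb - m, u.es - m⟩ with hv
  have hvfeas : P3Feasible a xmin xmax lb lf gmax gprev r v := by
    refine ⟨h1, h2, h3, h4, h5, h6, ?_, ?_, ?_⟩
    · simp only [hv]; exact sub_nonneg.mpr (min_le_left u.eb u.es)
    · simp only [hv]; exact sub_nonneg.mpr (min_le_right u.eb u.es)
    · simp only [hv]
      linarith [hbal]
  have := hmin v hvfeas
  have hlt : P3Obj s β D C V pb ps J lf v < P3Obj s β D C V pb ps J lf u := by
    simp only [P3Obj, hv]
    have : V * (pb - ps) * m > 0 :=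
      mul_pos (mul_pos hV (sub_pos.mpr hpbs)) hmp
    nlinarith
  linarith
end

section
/- In the P3 setup, let S denote the P3-feasible set and let S' denote the relaxed feasible set defined by the same constraints except that the ramping constraint |g − g_prev| ≤ r·g_max is removed. Suppose additionally that C is nondecreasing on [0, g_max] and differentiable there with 0 ≤ C'(x) ≤ C'_max for all x ∈ [0, g_max], that 0 ≤ p_b ≤ p_{b,max}, and that p_s ≥ 0. Then for every ũ ∈ S' there exists û ∈ S such that f(û) ≤ f(ũ) + V·(1 − r)·g_max·max(p_{b,max}, C'_max). In particular, since S ⊆ S', the infima satisfy inf_{S'} f ≤ inf_S f ≤ inf_{S'} f + V·(1 − r)·g_max·max(p_{b,max}, C'_max). -/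
/-- Relaxed feasibility: same constraints as `P3Feasible` with the ramping constraint
`|g − g_prev| ≤ r·g_max` removed. -/
def P3FeasibleRelaxed {N : ℕ} (a xmin xmax : Fin N → ℝ) (lb lf gmax : ℝ)
    (u : Ctrl N) : Prop :=
  lb ≤ u.lm ∧ u.lm ≤ lb + lf ∧
  (∀ i, xmin i ≤ u.x i ∧ u.x i ≤ xmax i ∧ u.x i ≤ a i) ∧
  0 ≤ u.g ∧ u.g ≤ gmax ∧
  0 ≤ u.eb ∧ 0 ≤ u.es ∧
  u.g + u.eb + ∑ i, (a i - u.x i) = u.es + u.lm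

/-- Also valid for the junk value `sInf = 0` of sets unbounded below, since `A` and `B` are then
unbounded together. -/
theorem Real.sInf_le_sInf_and_sInf_le_sInf_add {A B : Set ℝ} (hAB : A ⊆ B) (hA : A.Nonempty)
    {ε : ℝ} (hε : 0 ≤ ε) (hBA : ∀ y ∈ B, ∃ x ∈ A, x ≤ y + ε) :
    sInf B ≤ sInf A ∧ sInf A ≤ sInf B + ε := by
  by_cases hbdd : BddBelow A
  · have hbddB : BddBelow B := by
      obtain ⟨m, hm⟩ := hbdd
      refine ⟨m - ε, fun y hy => ?_⟩
      obtain ⟨x, hx, hxy⟩ := hBA y hy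
      linarith [hm hx]
    refine ⟨csInf_le_csInf hbddB hA hAB, ?_⟩
    have : sInf A - ε ≤ sInf B := le_csInf (hA.mono hAB) fun y hy => by
      obtain ⟨x, hx, hxy⟩ := hBA y hy
      linarith [csInf_le hbdd hx]
    linarith
  · rw [Real.sInf_of_not_bddBelow hbdd, Real.sInf_of_not_bddBelow fun h => hbdd (h.mono hAB)]
    exact ⟨le_rfl, by linarith⟩

theorem exists_mem_Icc_abs_sub_le_and_abs_sub_le {c x w G : ℝ} (hc : c ∈ Set.Icc 0 G)
    (hx : x ∈ Set.Icc 0 G) (hw : 0 ≤ w) (hwG : w ≤ G) :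
    ∃ y ∈ Set.Icc 0 G, |y - c| ≤ w ∧ |x - y| ≤ G - w := by
  obtain ⟨hc0, hcG⟩ := hc
  obtain ⟨hx0, hxG⟩ := hx
  refine ⟨max (c - w) (min x (c + w)), ⟨?_, ?_⟩, abs_le.2 ⟨?_, ?_⟩, abs_le.2 ⟨?_, ?_⟩⟩ <;> grind

theorem generation_swap_cost_le {C : ℝ → ℝ} {s : Set ℝ} (hC : MonotoneOn C s) {K : ℝ}
    (hCK : ∀ x ∈ s, ∀ y ∈ s, x ≤ y → C y - C x ≤ K * (y - x))
    {pb pbmax ps d g g' : ℝ} (hg : g ∈ s) (hg' : g' ∈ s) (hd : |g - g'| ≤ d)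
    (hpb0 : 0 ≤ pb) (hpb : pb ≤ pbmax) (hps : 0 ≤ ps) :
    C g' - C g + pb * (g - g')⁺ - ps * (g - g')⁻ ≤ d * max pbmax K := by
  have hM : pbmax ≤ max pbmax K := le_max_left _ _
  rcases le_total g' g with hle | hle
  · rw [posPart_eq_self.2 (sub_nonneg.2 hle), negPart_eq_zero.2 (sub_nonneg.2 hle)]
    have hgd : g - g' ≤ d := (le_abs_self _).trans hd
    have hCle : C g' ≤ C g := hC hg' hg hle
    nlinarith
  · rw [posPart_eq_zero.2 (sub_nonpos.2 hle), negPart_eq_neg.2 (sub_nonpos.2 hle)]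
    have hgd : g' - g ≤ d := by rw [abs_sub_comm] at hd; exact (le_abs_self _).trans hd
    have hCK' := hCK g hg g' hg' hle
    have hK : K ≤ max pbmax K := le_max_right _ _
    nlinarith

namespace Ctrl

variable {N : ℕ}

def withGen (u : Ctrl N) (g' : ℝ) : Ctrl N :=
  ⟨u.x, u.lm, g', u.eb + (u.g - g')⁺, u.es + (u.g - g')⁻⟩

theorem p3Obj_withGen (s β : Fin N → ℝ) (D : Fin N → ℝ → ℝ) (C : ℝ → ℝ) (V pb ps J lf : ℝ)
    (u : Ctrl N) (g' : ℝ) :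
    P3Obj s β D C V pb ps J lf (u.withGen g') = P3Obj s β D C V pb ps J lf u
      + V * (C g' - C u.g + pb * (u.g - g')⁺ - ps * (u.g - g')⁻) := by
  simp only [P3Obj, withGen]
  ring

end Ctrl

section P3

variable {N : ℕ} {a xmin xmax : Fin N → ℝ} {lb lf gmax gprev r : ℝ}

theorem p3Feasible_iff {u : Ctrl N} :
    P3Feasible a xmin xmax lb lf gmax gprev r u ↔
      P3FeasibleRelaxed a xmin xmax lb lf gmax u ∧ |u.g - gprev| ≤ r * gmax := by
  unfold P3Feasible P3FeasibleRelaxed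
  tauto

theorem P3FeasibleRelaxed.withGen {u : Ctrl N} (hu : P3FeasibleRelaxed a xmin xmax lb lf gmax u)
    {g' : ℝ} (hg' : g' ∈ Set.Icc 0 gmax) :
    P3FeasibleRelaxed a xmin xmax lb lf gmax (u.withGen g') := by
  obtain ⟨hlm₁, hlm₂, hx, -, -, heb, hes, hbal⟩ := hu
  have hsplit := posPart_sub_negPart (u.g - g')
  refine ⟨hlm₁, hlm₂, hx, hg'.1, hg'.2, ?_, ?_, ?_⟩ <;> simp only [Ctrl.withGen]
  · exact add_nonneg heb (posPart_nonneg _)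
  · exact add_nonneg hes (negPart_nonneg _)
  · linarith

theorem exists_p3Feasible (ha : ∀ i, 0 ≤ a i) (hlf : 0 ≤ lf) (hxmin : ∀ i, xmin i ≤ 0)
    (hxmax : ∀ i, 0 ≤ xmax i) (hgprev : gprev ∈ Set.Icc 0 gmax) (hr : 0 ≤ r) :
    ∃ u, P3Feasible a xmin xmax lb lf gmax gprev r u := by
  set t := lb - gprev - ∑ i, a i
  refine ⟨⟨0, lb, gprev, t⁺, t⁻⟩, le_rfl, by linarith, fun i => ⟨hxmin i, hxmax i, ha i⟩,
    hgprev.1, hgprev.2, ?_, posPart_nonneg t, negPart_nonneg t, ?_⟩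
  · simpa using mul_nonneg hr (hgprev.1.trans hgprev.2)
  · have := posPart_sub_negPart t
    simp only [Pi.zero_apply, sub_zero]
    linarith

theorem exists_p3Feasible_p3Obj_le_add {s β : Fin N → ℝ} {D : Fin N → ℝ → ℝ} {C : ℝ → ℝ}
    {V pb ps J pbmax K : ℝ} (hgprev : gprev ∈ Set.Icc 0 gmax) (hr : r ∈ Set.Icc (0 : ℝ) 1)
    (hV : 0 ≤ V) (hC : MonotoneOn C (Set.Icc 0 gmax))
    (hCK : ∀ x ∈ Set.Icc 0 gmax, ∀ y ∈ Set.Icc 0 gmax, x ≤ y → C y - C x ≤ K * (y - x))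
    (hpb0 : 0 ≤ pb) (hpb : pb ≤ pbmax) (hps : 0 ≤ ps) {u : Ctrl N}
    (hu : P3FeasibleRelaxed a xmin xmax lb lf gmax u) :
    ∃ u' : Ctrl N, P3Feasible a xmin xmax lb lf gmax gprev r u' ∧
      P3Obj s β D C V pb ps J lf u'
        ≤ P3Obj s β D C V pb ps J lf u + V * (1 - r) * gmax * max pbmax K := by
  have hgmax : 0 ≤ gmax := hgprev.1.trans hgprev.2
  have hg : u.g ∈ Set.Icc 0 gmax := ⟨hu.2.2.2.1, hu.2.2.2.2.1⟩
  obtain ⟨g', hg', hramp, hdist⟩ := exists_mem_Icc_abs_sub_le_and_abs_sub_le hgprev hg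
    (mul_nonneg hr.1 hgmax) (mul_le_of_le_one_left hgmax hr.2)
  refine ⟨u.withGen g', p3Feasible_iff.2 ⟨hu.withGen hg', hramp⟩, ?_⟩
  have hcost := generation_swap_cost_le hC hCK hg hg' hdist hpb0 hpb hps
  rw [Ctrl.p3Obj_withGen]
  linarith [mul_le_mul_of_nonneg_left hcost hV]

end P3

theorem stmt11_general (N : ℕ) (a s β xmin xmax : Fin N → ℝ)
    (lb lf pb ps J gmax gprev r V : ℝ)
    (D : Fin N → ℝ → ℝ) (C : ℝ → ℝ)
    (ha : ∀ i, 0 ≤ a i) (hlf : 0 < lf)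
    (hxmin : ∀ i, xmin i < 0) (hxmax : ∀ i, 0 < xmax i)
    (hgprev : gprev ∈ Set.Icc 0 gmax)
    (hr : r ∈ Set.Icc (0 : ℝ) 1) (hV : 0 < V)
    (C'max pbmax : ℝ)
    (hCmono : MonotoneOn C (Set.Icc 0 gmax))
    (hCdiff : ∀ x ∈ Set.Icc (0 : ℝ) gmax, DifferentiableAt ℝ C x)
    (hC'max : ∀ x ∈ Set.Icc (0 : ℝ) gmax, deriv C x ≤ C'max)
    (hpb0 : 0 ≤ pb) (hpb : pb ≤ pbmax) (hps : 0 ≤ ps) :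
    (∀ ut : Ctrl N, P3FeasibleRelaxed a xmin xmax lb lf gmax ut →
      ∃ uh : Ctrl N, P3Feasible a xmin xmax lb lf gmax gprev r uh ∧
        P3Obj s β D C V pb ps J lf uh
          ≤ P3Obj s β D C V pb ps J lf ut + V * (1 - r) * gmax * max pbmax C'max) ∧
    sInf (P3Obj s β D C V pb ps J lf '' {u | P3FeasibleRelaxed a xmin xmax lb lf gmax u})
      ≤ sInf (P3Obj s β D C V pb ps J lf '' {u | P3Feasible a xmin xmax lb lf gmax gprev r u}) ∧
    sInf (P3Obj s β D C V pb ps J lf '' {u | P3Feasible a xmin xmax lb lf gmax gprev r u})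
      ≤ sInf (P3Obj s β D C V pb ps J lf '' {u | P3FeasibleRelaxed a xmin xmax lb lf gmax u})
        + V * (1 - r) * gmax * max pbmax C'max := by
  have hCslope := (convex_Icc 0 gmax).image_sub_le_mul_sub_of_deriv_le
    (fun x hx => (hCdiff x hx).continuousAt.continuousWithinAt)
    (fun x hx => (hCdiff x (interior_subset hx)).differentiableWithinAt)
    (fun x hx => hC'max x (interior_subset hx))
  have hε : 0 ≤ V * (1 - r) * gmax * max pbmax C'max :=
    mul_nonneg (mul_nonneg (mul_nonneg hV.le (sub_nonneg.2 hr.2)) (hgprev.1.trans hgprev.2))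
      ((hpb0.trans hpb).trans (le_max_left _ _))
  have key := fun ut (hut : P3FeasibleRelaxed a xmin xmax lb lf gmax ut) =>
    exists_p3Feasible_p3Obj_le_add (s := s) (β := β) (D := D) (V := V) (J := J) hgprev hr hV.le
      hCmono hCslope hpb0 hpb hps hut
  refine ⟨key, Real.sInf_le_sInf_and_sInf_le_sInf_add
    (Set.image_mono fun u hu => (p3Feasible_iff.1 hu).1) ?_ hε ?_⟩
  · obtain ⟨u, hu⟩ := exists_p3Feasible ha hlf.le (fun i => (hxmin i).le)
      (fun i => (hxmax i).le) hgprev hr.1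
    exact ⟨_, u, hu, rfl⟩
  · rintro _ ⟨u, hu, rfl⟩
    obtain ⟨uh, huh, hle⟩ := key u hu
    exact ⟨_, ⟨uh, huh, rfl⟩, hle⟩

/-- Lemma 5: removing the ramping constraint lowers the optimal value of
P3 by at most `ε = V·(1−r)·g_max·max(p_{b,max}, C'_max)`. -/
theorem stmt11 (N : ℕ) (a s β xmin xmax : Fin N → ℝ)
    (lb lf pb ps J gmax gprev r V : ℝ)
    (D : Fin N → ℝ → ℝ) (C : ℝ → ℝ)
    (ha : ∀ i, 0 ≤ a i) (hlb : 0 ≤ lb) (hlf : 0 < lf) (hJ : 0 ≤ J)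
    (hxmin : ∀ i, xmin i < 0) (hxmax : ∀ i, 0 < xmax i)
    (hgmax : 0 < gmax) (hgprev : gprev ∈ Set.Icc 0 gmax)
    (hr : r ∈ Set.Icc (0 : ℝ) 1) (hV : 0 < V)
    (C'max pbmax : ℝ)
    (hCmono : MonotoneOn C (Set.Icc 0 gmax))
    (hCdiff : ∀ x ∈ Set.Icc (0 : ℝ) gmax, DifferentiableAt ℝ C x)
    (hC'0 : ∀ x ∈ Set.Icc (0 : ℝ) gmax, 0 ≤ deriv C x)
    (hC'max : ∀ x ∈ Set.Icc (0 : ℝ) gmax, deriv C x ≤ C'max)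
    (hpb0 : 0 ≤ pb) (hpb : pb ≤ pbmax) (hps : 0 ≤ ps) :
    (∀ ut : Ctrl N, P3FeasibleRelaxed a xmin xmax lb lf gmax ut →
      ∃ uh : Ctrl N, P3Feasible a xmin xmax lb lf gmax gprev r uh ∧
        P3Obj s β D C V pb ps J lf uh
          ≤ P3Obj s β D C V pb ps J lf ut + V * (1 - r) * gmax * max pbmax C'max) ∧
    sInf (P3Obj s β D C V pb ps J lf '' {u | P3FeasibleRelaxed a xmin xmax lb lf gmax u})
      ≤ sInf (P3Obj s β D C V pb ps J lf '' {u | P3Feasible a xmin xmax lb lf gmax gprev r u}) ∧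
    sInf (P3Obj s β D C V pb ps J lf '' {u | P3Feasible a xmin xmax lb lf gmax gprev r u})
      ≤ sInf (P3Obj s β D C V pb ps J lf '' {u | P3FeasibleRelaxed a xmin xmax lb lf gmax u})
        + V * (1 - r) * gmax * max pbmax C'max :=
  stmt11_general N a s β xmin xmax lb lf pb ps J gmax gprev r V D C ha hlf hxmin hxmax hgprev hr hV
    C'max pbmax hCmono hCdiff hC'max hpb0 hpb hps
end

section
/- Let C : ℝ → ℝ be differentiable on [0, g_max] with C'(x) ≤ C'_max for all x ∈ [0, g_max], where C'_max ≥ 0, g_max > 0, r ∈ [0,1], and p_s ≥ 0. Let g̃ and g_prev be reals with 0 ≤ g̃, g_prev ≤ g_max, and g̃ < g_prev − r·g_max. Then C(g_prev − r·g_max) − C(g̃) + p_s·(g̃ − g_prev + r·g_max) ≤ (1 − r)·g_max·C'_max. -/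
/-- Case 3 of the proof of Lemma 5: the ramping constraint forces the
generator to produce more energy, the surplus being sold externally. -/
theorem stmt12 (C : ℝ → ℝ) (C' : ℝ → ℝ) (gmax C'max r ps gtil gprev : ℝ)
    (hC : ∀ x ∈ Set.Icc (0 : ℝ) gmax, HasDerivAt C (C' x) x)
    (hC'max : ∀ x ∈ Set.Icc (0 : ℝ) gmax, C' x ≤ C'max)
    (hC'max0 : 0 ≤ C'max) (hgmax : 0 < gmax)
    (hr : r ∈ Set.Icc (0 : ℝ) 1) (hps : 0 ≤ ps)
    (hgtil0 : 0 ≤ gtil) (hgtil1 : gtil ≤ gmax)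
    (hgprev0 : 0 ≤ gprev) (hgprev1 : gprev ≤ gmax)
    (hlt : gtil < gprev - r * gmax) :
    C (gprev - r * gmax) - C gtil + ps * (gtil - gprev + r * gmax)
      ≤ (1 - r) * gmax * C'max := by
  obtain ⟨hr0, hr1⟩ := hr
  set b := gprev - r * gmax with hb
  have hb_le : b ≤ gmax := by nlinarith
  have hb_ge : 0 ≤ b := le_trans hgtil0 hlt.le
  have hsub : Set.Icc gtil b ⊆ Set.Icc 0 gmax :=
    Set.Icc_subset_Icc hgtil0 hb_le
  have hcont : ContinuousOn C (Set.Icc gtil b) := fun x hx =>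
    ((hC x (hsub hx)).continuousAt).continuousWithinAt
  have hderiv : ∀ x ∈ Set.Ioo gtil b, HasDerivAt C (C' x) x := fun x hx =>
    hC x (hsub (Set.Ioo_subset_Icc_self hx))
  obtain ⟨c, hc, hceq⟩ := exists_hasDerivAt_eq_slope C C' hlt hcont hderiv
  have hcle : C' c ≤ C'max := hC'max c (hsub (Set.Ioo_subset_Icc_self hc))
  have hCb : C b - C gtil = C' c * (b - gtil) := by
    have hne : b - gtil ≠ 0 := by linarith
    field_simp at hceq
    linarith
  have h1 : C b - C gtil ≤ C'max * (b - gtil) := by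
    rw [hCb]; exact mul_le_mul_of_nonneg_right hcle (by linarith)
  have h2 : ps * (gtil - gprev + r * gmax) ≤ 0 := by nlinarith
  nlinarith [mul_le_mul_of_nonneg_left (sub_nonneg.2 hgtil0) hC'max0]
end

section
/- Fix N ∈ ℕ, bounds x_{i,min} < 0 < x_{i,max} and s_{i,min} < s_{i,max} for i = 1,…,N, g_max > 0, r ∈ [0,1], α ∈ [0,1], l_{f,max} > 0, and constants p_{s,min}, p_{b,max}, D'_{i,min}, D'_{i,max} with p_{b,max} − p_{s,min} + D'_{i,max} − D'_{i,min} > 0 and s_{i,max} − s_{i,min} + x_{i,min} − x_{i,max} > 0 for all i. Let 0 < V ≤ V_max where V_max = min_{1≤i≤N} (s_{i,max} − s_{i,min} + x_{i,min} − x_{i,max})/(p_{b,max} − p_{s,min} + D'_{i,max} − D'_{i,min}), and set β_i = V·(p_{b,max} + D'_{i,max}) − x_{i,min} + s_{i,min}. For each slot t let the data satisfy a_i(t) ≥ 0, l_b(t) ≥ 0, 0 < l_f(t) ≤ l_{f,max}, and 0 ≤ p_{s,min} ≤ p_s(t) < p_b(t) ≤ p_{b,max}; let each D_i be differentiable with D'_{i,min}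 ≤ D_i'(x) ≤ D'_{i,max} on [x_{i,min}, x_{i,max}], and let C : ℝ → ℝ. Initialize J(0) = 0, s_i(0) ∈ [s_{i,min}, s_{i,max}], g(−1) ∈ [0, g_max], and suppose for every t the vector u(t) = (x_1(t),…,x_N(t), l_m(t), g(t), e_b(t), e_s(t)) is a minimizer of the P3 objective f_t(u) = Σ_i [V·D_i(x_i) + (s_i(t) − β_i)·x_i] + V·C(g) + V·p_b(t)·e_b − V·p_s(t)·e_s − (J(t)/l_f(t))·l_m over the P3-feasible set with parameters (a_i(t), l_b(t), l_f(t), g_prev = g(t−1), s_i(t), J(t)), and that the states update as s_i(t+1) = s_i(t) + x_i(t) and J(t+1) = max(J(t) − α, 0) + (l_b(t) + l_f(t) − l_m(t))/l_f(t). Then for all i and all t, s_{i,min} ≤ s_i(t) ≤ s_{i,max}, and limsup_{T→∞} (1/T)·Σ_{t=0}^{T−1} (l_b(t) + l_f(t) − l_m(t))/l_f(t) ≤ α; that is, the control actions produced by Algorithm 1 are feasible for the original problem P1. -/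
open Set Filter

lemma sum_update_eq_add_sub {ι M : Type*} [Fintype ι] [DecidableEq ι] [AddCommGroup M]
    (f : ι → M) (i : ι) (b : M) : ∑ j, Function.update f i b j = ∑ j, f j + (b - f i) := by
  rw [Finset.sum_update_of_mem (Finset.mem_univ i),
    Finset.sum_eq_add_sum_sdiff_singleton_of_mem (Finset.mem_univ i) f]
  abel

lemma mem_Icc_of_reverting_increments {s x : ℕ → ℝ} {lo hi xlo xhi θlo θhi : ℝ}
    (h0 : s 0 ∈ Icc lo hi) (hrec : ∀ t, s (t + 1) = s t + x t)
    (hx : ∀ t, x t ∈ Icc xlo xhi) (hlo : lo ≤ θlo + xlo) (hhi : θhi + xhi ≤ hi)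
    (hdown : ∀ t, θhi < s t → x t ≤ 0) (hup : ∀ t, s t < θlo → 0 ≤ x t) :
    ∀ t, s t ∈ Icc lo hi := by
  intro t
  induction t with
  | zero => exact h0
  | succ t ih =>
    rw [hrec t]
    have hxt := hx t
    constructor
    · rcases lt_or_ge (s t) θlo with h | h
      · linarith [hup t h, ih.1]
      · linarith [hxt.1]
    · rcases lt_or_ge θhi (s t) with h | h
      · linarith [hdown t h, ih.2]
      · linarith [hxt.2]

lemma queue_le_threshold_add_one {J y : ℕ → ℝ} {α K : ℝ} (hα : 0 ≤ α) (hK : 0 ≤ K)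
    (h0 : J 0 ≤ K + 1) (hrec : ∀ t, J (t + 1) = max (J t - α) 0 + y t)
    (hy : ∀ t, y t ≤ 1) (hserved : ∀ t, K < J t → y t = 0) :
    ∀ t, J t ≤ K + 1 := by
  intro t
  induction t with
  | zero => exact h0
  | succ t ih =>
    rw [hrec t]
    rcases lt_or_ge K (J t) with h | h
    · rw [hserved t h, add_zero]
      exact max_le (by linarith) (by linarith)
    · linarith [hy t, max_le (by linarith : J t - α ≤ K) hK]

lemma limsup_average_le_of_queue {J y : ℕ → ℝ} {α B : ℝ}
    (hrec : ∀ t, J t - α + y t ≤ J (t + 1)) (hy : ∀ t, 0 ≤ y t) (hB : ∀ t, J t ≤ B) :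
    limsup (fun T : ℕ => (1 / (T : ℝ)) * ∑ t ∈ Finset.range T, y t) atTop ≤ α := by
  have hsum : ∀ T : ℕ, ∑ t ∈ Finset.range T, y t ≤ (B - J 0) + T * α := fun T =>
    calc ∑ t ∈ Finset.range T, y t ≤ ∑ t ∈ Finset.range T, (J (t + 1) - J t + α) :=
          Finset.sum_le_sum fun t _ => by linarith [hrec t]
      _ = J T - J 0 + T * α := by rw [Finset.sum_add_distrib, Finset.sum_range_sub]; simp
      _ ≤ (B - J 0) + T * α := by linarith [hB T]
  have havg : ∀ᶠ T : ℕ in atTop,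
      (1 / (T : ℝ)) * ∑ t ∈ Finset.range T, y t ≤ α + (B - J 0) * (1 / T) := by
    filter_upwards [eventually_gt_atTop 0] with T hT
    have hT' : (0 : ℝ) < T := by exact_mod_cast hT
    calc (1 / (T : ℝ)) * ∑ t ∈ Finset.range T, y t ≤ (1 / T) * ((B - J 0) + T * α) :=
          mul_le_mul_of_nonneg_left (hsum T) (by positivity)
      _ = α + (B - J 0) * (1 / T) := by field_simp; ring
  have htend : Tendsto (fun T : ℕ => α + (B - J 0) * (1 / (T : ℝ))) atTop (nhds α) := by
    simpa using tendsto_const_nhds.add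
      (tendsto_one_div_atTop_nhds_zero_nat.const_mul (B - J 0))
  have hcob : IsCoboundedUnder (· ≤ ·) atTop
      (fun T : ℕ => (1 / (T : ℝ)) * ∑ t ∈ Finset.range T, y t) :=
    (isBoundedUnder_of ⟨0, fun T =>
      mul_nonneg (by positivity) (Finset.sum_nonneg fun t _ => hy t)⟩).isCoboundedUnder_le
  calc _ ≤ limsup (fun T : ℕ => α + (B - J 0) * (1 / (T : ℝ))) atTop :=
        limsup_le_limsup havg hcob htend.isBoundedUnder_le
    _ = α := htend.limsup_eq

lemma mul_sub_le_sub_of_le_deriv_Icc {f : ℝ → ℝ} {p q m : ℝ}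
    (hf : DifferentiableOn ℝ f (Icc p q)) (hf' : ∀ x ∈ Icc p q, m ≤ deriv f x) {x y : ℝ}
    (hx : x ∈ Icc p q) (hy : y ∈ Icc p q) (hxy : x ≤ y) : m * (y - x) ≤ f y - f x :=
  (convex_Icc p q).mul_sub_le_image_sub_of_le_deriv hf.continuousOn (hf.mono interior_subset)
    (fun z hz => hf' z (interior_subset hz)) x hx y hy hxy

lemma sub_le_mul_sub_of_deriv_le_Icc {f : ℝ → ℝ} {p q M : ℝ}
    (hf : DifferentiableOn ℝ f (Icc p q)) (hf' : ∀ x ∈ Icc p q, deriv f x ≤ M) {x y : ℝ}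
    (hx : x ∈ Icc p q) (hy : y ∈ Icc p q) (hxy : x ≤ y) : f y - f x ≤ M * (y - x) :=
  (convex_Icc p q).image_sub_le_mul_sub_of_deriv_le hf.continuousOn (hf.mono interior_subset)
    (fun z hz => hf' z (interior_subset hz)) x hx y hy hxy

section P3

variable {N : ℕ} {a xmin xmax s β : Fin N → ℝ} {lb lf gmax gprev r V pb ps J : ℝ}
  {D : Fin N → ℝ → ℝ} {C : ℝ → ℝ} {u : Ctrl N}

lemma P3Feasible.update_x_zero (hu : P3Feasible a xmin xmax lb lf gmax gprev r u) {i : Fin N}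
    (hxmin : xmin i ≤ 0) (hxmax : 0 ≤ xmax i) (ha : 0 ≤ a i) {eb es : ℝ} (heb : 0 ≤ eb)
    (hes : 0 ≤ es) (hbal : eb - es = u.eb - u.es - u.x i) :
    P3Feasible a xmin xmax lb lf gmax gprev r
      ⟨Function.update u.x i 0, u.lm, u.g, eb, es⟩ := by
  obtain ⟨hlm₁, hlm₂, hx, hg₀, hg₁, hramp, -, -, hsum⟩ := hu
  refine ⟨hlm₁, hlm₂, fun j => ?_, hg₀, hg₁, hramp, heb, hes, ?_⟩
  · rcases eq_or_ne j i with rfl | hj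
    · simpa using ⟨hxmin, hxmax, ha⟩
    · simpa [hj] using hx j
  · show u.g + eb + ∑ j, (a j - Function.update u.x i 0 j) = es + u.lm
    rw [Finset.sum_sub_distrib] at hsum
    rw [Finset.sum_sub_distrib, sum_update_eq_add_sub]
    linarith

lemma P3Obj_update_x (i : Fin N) (y eb es : ℝ) :
    P3Obj s β D C V pb ps J lf ⟨Function.update u.x i y, u.lm, u.g, eb, es⟩
      = P3Obj s β D C V pb ps J lf u + (V * (D i y - D i (u.x i)) + (s i - β i) * (y - u.x i))
        + V * pb * (eb - u.eb) - V * ps * (es - u.es) := by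
  have := sum_update_eq_add_sub (fun j => V * D j (u.x j) + (s j - β j) * u.x j) i
    (V * D i y + (s i - β i) * y)
  rw [← funext (Function.apply_update (fun j x => V * D j x + (s j - β j) * x) u.x i y)] at this
  simp only [P3Obj, this]
  ring

lemma P3Feasible.x_mem_Icc (hu : P3Feasible a xmin xmax lb lf gmax gprev r u) (i : Fin N) :
    u.x i ∈ Icc (xmin i) (xmax i) :=
  ⟨(hu.2.2.1 i).1, (hu.2.2.1 i).2.1⟩

lemma P3Feasible.unserved_mem_Icc (hu : P3Feasible a xmin xmax lb lf gmax gprev r u)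
    (hlf : 0 < lf) : (lb + lf - u.lm) / lf ∈ Icc 0 1 := by
  obtain ⟨hlm₁, hlm₂, -⟩ := hu
  constructor
  · exact div_nonneg (by linarith) hlf.le
  · rw [div_le_one hlf]; linarith

variable (hu : P3Feasible a xmin xmax lb lf gmax gprev r u)
  (hmin : IsMinOn (P3Obj s β D C V pb ps J lf) {v | P3Feasible a xmin xmax lb lf gmax gprev r v} u)
include hu hmin

lemma x_nonpos_of_isMinOn {i : Fin N} (hxmin : xmin i ≤ 0) (hxmax : 0 ≤ xmax i) (ha : 0 ≤ a i)
    (hV : 0 ≤ V) (hD : DifferentiableOn ℝ (D i) (Icc (xmin i) (xmax i))) {m : ℝ}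
    (hD' : ∀ x ∈ Icc (xmin i) (xmax i), m ≤ deriv (D i) x) (hs : β i - V * (ps + m) < s i) :
    u.x i ≤ 0 := by
  have ⟨_, _, _, _, _, _, heb, hes, _⟩ := hu
  by_contra! hx
  have hv := hu.update_x_zero hxmin hxmax ha heb (add_nonneg hes hx.le)
    (by ring : u.eb - (u.es + u.x i) = _)
  have hobj := isMinOn_iff.1 hmin _ hv
  rw [P3Obj_update_x] at hobj
  have hslope := mul_sub_le_sub_of_le_deriv_Icc hD hD' ⟨hxmin, hxmax⟩ (hu.x_mem_Icc i) hx.le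
  have hloss : 0 ≤ u.x i * (β i - V * (ps + m) - s i) := by
    nlinarith [mul_le_mul_of_nonneg_left hslope hV]
  nlinarith

lemma x_nonneg_of_isMinOn {i : Fin N} (hxmin : xmin i ≤ 0) (hxmax : 0 ≤ xmax i) (ha : 0 ≤ a i)
    (hV : 0 ≤ V) (hD : DifferentiableOn ℝ (D i) (Icc (xmin i) (xmax i))) {M : ℝ}
    (hD' : ∀ x ∈ Icc (xmin i) (xmax i), deriv (D i) x ≤ M) (hs : s i < β i - V * (pb + M)) :
    0 ≤ u.x i := by
  have ⟨_, _, _, _, _, _, heb, hes, _⟩ := hu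
  by_contra! hx
  have hv := hu.update_x_zero hxmin hxmax ha (by linarith : 0 ≤ u.eb - u.x i) hes
    (by ring : u.eb - u.x i - u.es = _)
  have hobj := isMinOn_iff.1 hmin _ hv
  rw [P3Obj_update_x] at hobj
  have hslope := sub_le_mul_sub_of_deriv_le_Icc hD hD' (hu.x_mem_Icc i) ⟨hxmin, hxmax⟩ hx.le
  have hloss : 0 ≤ -u.x i * (V * (pb + M) - β i + s i) := by
    nlinarith [mul_le_mul_of_nonneg_left hslope hV]
  nlinarith

lemma lm_eq_of_isMinOn (hlf : 0 < lf) (hJ : V * pb * lf < J) : u.lm = lb + lf := by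
  have ⟨_, hlm₂, hxb, hg₀, hg₁, hramp, heb, hes, hsum⟩ := hu
  set δ := lb + lf - u.lm
  have hv : P3Feasible a xmin xmax lb lf gmax gprev r ⟨u.x, lb + lf, u.g, u.eb + δ, u.es⟩ :=
    ⟨by simp only; linarith, le_rfl, hxb, hg₀, hg₁, hramp, by simp only; linarith, hes,
      by simp only; linarith⟩
  have hobj := isMinOn_iff.1 hmin _ hv
  have hgain : V * pb - J / lf < 0 := by rw [sub_neg, lt_div_iff₀ hlf]; exact hJ
  have : δ ≤ 0 := nonpos_of_mul_nonneg_left (by simp only [P3Obj] at hobj; linarith) hgain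
  linarith

end P3

theorem stmt18_general (N : ℕ)
    (xmin xmax smin smax : Fin N → ℝ)
    (gmax r α lfmax psmin pbmax V : ℝ)
    (Dmin Dmax : Fin N → ℝ) (β : Fin N → ℝ)
    (hxmin : ∀ i, xmin i < 0) (hxmax : ∀ i, 0 < xmax i)
    (hα : α ∈ Set.Icc (0 : ℝ) 1)
    (hlfmax : 0 < lfmax)
    (hden : ∀ i, 0 < pbmax - psmin + Dmax i - Dmin i)
    (hV0 : 0 < V)
    (hVmax : ∀ i, V ≤ (smax i - smin i + xmin i - xmax i)
        / (pbmax - psmin + Dmax i - Dmin i))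
    (hβ : ∀ i, β i = V * (pbmax + Dmax i) - xmin i + smin i)
    (a : ℕ → Fin N → ℝ) (lb lf pb ps : ℕ → ℝ)
    (D : Fin N → ℝ → ℝ) (C : ℝ → ℝ)
    (ha : ∀ t i, 0 ≤ a t i)
    (hlf : ∀ t, 0 < lf t ∧ lf t ≤ lfmax)
    (hpsmin : 0 ≤ psmin) (hps : ∀ t, psmin ≤ ps t)
    (hpbs : ∀ t, ps t < pb t) (hpb : ∀ t, pb t ≤ pbmax)
    (hDdiff : ∀ i, ∀ x ∈ Set.Icc (xmin i) (xmax i), DifferentiableAt ℝ (D i) x)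
    (hD' : ∀ i, ∀ x ∈ Set.Icc (xmin i) (xmax i),
        Dmin i ≤ deriv (D i) x ∧ deriv (D i) x ≤ Dmax i)
    (s : ℕ → Fin N → ℝ) (J : ℕ → ℝ) (u : ℕ → Ctrl N) (gprev : ℕ → ℝ)
    (hJ0 : J 0 = 0)
    (hs0 : ∀ i, s 0 i ∈ Set.Icc (smin i) (smax i))
    (hfeas : ∀ t, P3Feasible (a t) xmin xmax (lb t) (lf t) gmax (gprev t) r (u t))
    (hmin : ∀ t, ∀ v : Ctrl N,
        P3Feasible (a t) xmin xmax (lb t) (lf t) gmax (gprev t) r v →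
        P3Obj (s t) β D C V (pb t) (ps t) (J t) (lf t) (u t)
          ≤ P3Obj (s t) β D C V (pb t) (ps t) (J t) (lf t) v)
    (hsrec : ∀ t i, s (t + 1) i = s t i + (u t).x i)
    (hJrec : ∀ t, J (t + 1) = max (J t - α) 0 + (lb t + lf t - (u t).lm) / lf t) :
    (∀ i t, smin i ≤ s t i ∧ s t i ≤ smax i) ∧
    Filter.limsup (fun T : ℕ => (1 / (T : ℝ)) * ∑ t ∈ Finset.range T,
        (lb t + lf t - (u t).lm) / lf t) Filter.atTop ≤ α := by
  have hopt : ∀ t, IsMinOn (P3Obj (s t) β D C V (pb t) (ps t) (J t) (lf t))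
      {v | P3Feasible (a t) xmin xmax (lb t) (lf t) gmax (gprev t) r v} (u t) :=
    fun t => isMinOn_iff.2 (hmin t)
  have hDon : ∀ i, DifferentiableOn ℝ (D i) (Icc (xmin i) (xmax i)) :=
    fun i x hx => (hDdiff i x hx).differentiableWithinAt
  have hfull : ∀ i t, β i - V * (psmin + Dmin i) < s t i → (u t).x i ≤ 0 := fun i t hst =>
    x_nonpos_of_isMinOn (hfeas t) (hopt t) (hxmin i).le (hxmax i).le (ha t i) hV0.le (hDon i)
      (fun x hx => (hD' i x hx).1) (lt_of_le_of_lt (by nlinarith [hps t]) hst)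
  have hempty : ∀ i t, s t i < smin i - xmin i → 0 ≤ (u t).x i := fun i t hst =>
    x_nonneg_of_isMinOn (hfeas t) (hopt t) (hxmin i).le (hxmax i).le (ha t i) hV0.le (hDon i)
      (fun x hx => (hD' i x hx).2) (lt_of_lt_of_le hst (by rw [hβ i]; nlinarith [hpb t]))
  have hVpb : 0 ≤ V * pbmax := mul_nonneg hV0.le (by linarith [hps 0, hpbs 0, hpb 0])
  have hserved : ∀ t, V * pbmax * lfmax < J t → (lb t + lf t - (u t).lm) / lf t = 0 :=
    fun t hJt => by
      have hthr : V * pb t * lf t ≤ V * pbmax * lfmax :=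
        mul_le_mul (mul_le_mul_of_nonneg_left (hpb t) hV0.le) (hlf t).2 (hlf t).1.le hVpb
      simp [lm_eq_of_isMinOn (hfeas t) (hopt t) (hlf t).1 (hthr.trans_lt hJt)]
  have hunserved := fun t => (hfeas t).unserved_mem_Icc (hlf t).1
  refine ⟨fun i t => mem_Icc_of_reverting_increments (hs0 i) (fun t => hsrec t i)
    (fun t => (hfeas t).x_mem_Icc i) (by linarith) ?_ (hfull i) (hempty i) t, ?_⟩
  · rw [hβ i]
    linarith [(le_div_iff₀ (hden i)).1 (hVmax i)]
  · have hK : 0 ≤ V * pbmax * lfmax := mul_nonneg hVpb hlfmax.le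
    refine limsup_average_le_of_queue (fun t => ?_) (fun t => (hunserved t).1)
      (queue_le_threshold_add_one hα.1 hK (by linarith) hJrec (fun t => (hunserved t).2) hserved)
    rw [hJrec t]
    linarith [le_max_left (J t - α) 0]

/-- pathwise Proposition 1: with perturbation parameters `βᵢ` as in (13)
and `V ∈ (0, V_max]`, the real-time algorithm (per-slot minimization of P3 together
with the storage and virtual-queue updates) keeps every storage energy state within its
capacity limits, and the long-term time-averaged portion of unsatisfied flexible loads
is at most `α`; i.e., the control actions produced by Algorithm 1 are feasible for the
original problem P1. -/
theorem stmt18 (N : ℕ)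
    (xmin xmax smin smax : Fin N → ℝ)
    (gmax r α lfmax psmin pbmax V : ℝ)
    (Dmin Dmax : Fin N → ℝ) (β : Fin N → ℝ)
    (hxmin : ∀ i, xmin i < 0) (hxmax : ∀ i, 0 < xmax i)
    (hsbounds : ∀ i, smin i < smax i)
    (hgmax : 0 < gmax) (hr : r ∈ Set.Icc (0 : ℝ) 1) (hα : α ∈ Set.Icc (0 : ℝ) 1)
    (hlfmax : 0 < lfmax)
    (hden : ∀ i, 0 < pbmax - psmin + Dmax i - Dmin i)
    (hnum : ∀ i, 0 < smax i - smin i + xmin i - xmax i)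
    (hV0 : 0 < V)
    (hVmax : ∀ i, V ≤ (smax i - smin i + xmin i - xmax i)
        / (pbmax - psmin + Dmax i - Dmin i))
    (hβ : ∀ i, β i = V * (pbmax + Dmax i) - xmin i + smin i)
    (a : ℕ → Fin N → ℝ) (lb lf pb ps : ℕ → ℝ)
    (D : Fin N → ℝ → ℝ) (C : ℝ → ℝ)
    (ha : ∀ t i, 0 ≤ a t i) (hlb : ∀ t, 0 ≤ lb t)
    (hlf : ∀ t, 0 < lf t ∧ lf t ≤ lfmax)
    (hpsmin : 0 ≤ psmin) (hps : ∀ t, psmin ≤ ps t)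
    (hpbs : ∀ t, ps t < pb t) (hpb : ∀ t, pb t ≤ pbmax)
    (hDdiff : ∀ i, ∀ x ∈ Set.Icc (xmin i) (xmax i), DifferentiableAt ℝ (D i) x)
    (hD' : ∀ i, ∀ x ∈ Set.Icc (xmin i) (xmax i),
        Dmin i ≤ deriv (D i) x ∧ deriv (D i) x ≤ Dmax i)
    (s : ℕ → Fin N → ℝ) (J : ℕ → ℝ) (u : ℕ → Ctrl N) (gprev : ℕ → ℝ)
    (hJ0 : J 0 = 0)
    (hs0 : ∀ i, s 0 i ∈ Set.Icc (smin i) (smax i))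
    (hg0 : gprev 0 ∈ Set.Icc 0 gmax)
    (hgrec : ∀ t, gprev (t + 1) = (u t).g)
    (hfeas : ∀ t, P3Feasible (a t) xmin xmax (lb t) (lf t) gmax (gprev t) r (u t))
    (hmin : ∀ t, ∀ v : Ctrl N,
        P3Feasible (a t) xmin xmax (lb t) (lf t) gmax (gprev t) r v →
        P3Obj (s t) β D C V (pb t) (ps t) (J t) (lf t) (u t)
          ≤ P3Obj (s t) β D C V (pb t) (ps t) (J t) (lf t) v)
    (hsrec : ∀ t i, s (t + 1) i = s t i + (u t).x i)
    (hJrec : ∀ t, J (t + 1) = max (J t - α) 0 + (lb t + lf t - (u t).lm) / lf t) :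
    (∀ i t, smin i ≤ s t i ∧ s t i ≤ smax i) ∧
    Filter.limsup (fun T : ℕ => (1 / (T : ℝ)) * ∑ t ∈ Finset.range T,
        (lb t + lf t - (u t).lm) / lf t) Filter.atTop ≤ α :=
  stmt18_general N xmin xmax smin smax gmax r α lfmax psmin pbmax V Dmin Dmax β hxmin hxmax hα
    hlfmax hden hV0 hVmax hβ a lb lf pb ps D C ha hlf hpsmin hps hpbs hpb hDdiff hD' s J u gprev hJ0
    hs0 hfeas hmin hsrec hJrec
end
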